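/- (Stokes' theorem for a parametrized 2-surface in ℝ³.) Let R = [a¹,b¹]×[a²,b²] ⊂ ℝ², let x : U₀ → ℝ³ be a C² map on an open neighborhood U₀ of R whose partial derivatives x₁(s) = ∂x/∂s¹(s) and x₂(s) = ∂x/∂s²(s) are linearly independent for every s ∈ R, and let F : U → ℝ³ be a C¹ vector field on an open set U containing x(R). Then ∫_R ⟪(∇×F)(x(s)), x₁(s) × x₂(s)⟫ ds¹ds² = ∫_{a¹}^{b¹} ⟪F(x(t,a²)), x₁(t,a²)⟫ dt + ∫_{a²}^{b²} ⟪F(x(b¹,t)), x₂(b¹,t)⟫ dt − ∫_{a¹}^{b¹} ⟪F(x(t,b²)), x₁(t,b²)⟫ dt − ∫_{a²}^{b²} ⟪F(x(a¹,t)), x₂(a¹,t)⟫ dt, where ∇×F is the curl of F and × is the cross product on ℝ³. -/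

import Mathlib

open MeasureTheory RealInnerProductSpace

noncomputable section

/-! Pulling the 1-form `⟪F, ·⟫` back along `x` gives `P ds¹ + Q ds²` with `P = ⟪F ∘ x, x₁⟫` and
`Q = ⟪F ∘ x, x₂⟫`. In `∂₁Q - ∂₂P` the terms `⟪F ∘ x, ∂₁∂₂x⟫` cancel by symmetry of the second
derivative, leaving `⟪DF(x) x₁, x₂⟫ - ⟪DF(x) x₂, x₁⟫ = ⟪(∇×F)(x), x₁ × x₂⟫`. Green's theorem on
the rectangle (the divergence theorem applied to `(Q, -P)`) turns its integral into the boundary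
circulation. -/

/-- The cross product on Euclidean 3-space. -/
def cross3 (u v : EuclideanSpace ℝ (Fin 3)) : EuclideanSpace ℝ (Fin 3) :=
  (WithLp.equiv 2 (Fin 3 → ℝ)).symm
    ![u 1 * v 2 - u 2 * v 1, u 2 * v 0 - u 0 * v 2, u 0 * v 1 - u 1 * v 0]

/-- The curl `∇×F` of a vector field on Euclidean 3-space. -/
def curl3 (F : EuclideanSpace ℝ (Fin 3) → EuclideanSpace ℝ (Fin 3))
    (p : EuclideanSpace ℝ (Fin 3)) : EuclideanSpace ℝ (Fin 3) :=
  (WithLp.equiv 2 (Fin 3 → ℝ)).symm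
    ![fderiv ℝ F p (EuclideanSpace.single 1 (1 : ℝ)) 2
        - fderiv ℝ F p (EuclideanSpace.single 2 (1 : ℝ)) 1,
      fderiv ℝ F p (EuclideanSpace.single 2 (1 : ℝ)) 0
        - fderiv ℝ F p (EuclideanSpace.single 0 (1 : ℝ)) 2,
      fderiv ℝ F p (EuclideanSpace.single 0 (1 : ℝ)) 1
        - fderiv ℝ F p (EuclideanSpace.single 1 (1 : ℝ)) 0]

theorem inner_curl3_cross3 (F : EuclideanSpace ℝ (Fin 3) → EuclideanSpace ℝ (Fin 3))
    (p u v : EuclideanSpace ℝ (Fin 3)) :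
    ⟪curl3 F p, cross3 u v⟫ = ⟪fderiv ℝ F p u, v⟫ - ⟪fderiv ℝ F p v, u⟫ := by
  have expand (w : EuclideanSpace ℝ (Fin 3)) :
      fderiv ℝ F p w = ∑ i, w i • fderiv ℝ F p (EuclideanSpace.single i 1) := by
    conv_lhs => rw [← (EuclideanSpace.basisFun (Fin 3) ℝ).sum_repr w]
    simp [map_sum]
  rw [expand u, expand v]
  simp only [curl3, cross3, PiLp.inner_apply, RCLike.inner_apply, conj_trivial,
    Fin.sum_univ_three, PiLp.add_apply, PiLp.smul_apply, WithLp.equiv_symm_apply, smul_eq_mul,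
    Matrix.cons_val_zero, Matrix.cons_val_one, Matrix.cons_val_two, Matrix.head_cons,
    Matrix.tail_cons]
  ring

section Pullback

variable {G E : Type*} [NormedAddCommGroup G] [NormedSpace ℝ G]
  [NormedAddCommGroup E] [InnerProductSpace ℝ E]

/-- The pullback `x^*⟪F, ·⟫` of the 1-form dual to `F`, evaluated at `s` on `w`. -/
def pullbackForm (F : E → E) (x : G → E) (w : G) (s : G) : ℝ := ⟪F (x s), fderiv ℝ x s w⟫

variable {F : E → E} {x : G → E} {s : G}

theorem ContDiffAt.pullbackForm (hx : ContDiffAt ℝ 2 x s) (hF : ContDiffAt ℝ 1 F (x s))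
    (w : G) : ContDiffAt ℝ 1 (pullbackForm F x w) s :=
  (hF.comp s (hx.of_le one_le_two)).inner ℝ
    ((hx.fderiv_right one_add_one_eq_two.le).clm_apply contDiffAt_const)

theorem fderiv_pullbackForm_apply (hx : ContDiffAt ℝ 2 x s) (hF : DifferentiableAt ℝ F (x s))
    (v w : G) :
    fderiv ℝ (pullbackForm F x w) s v
      = ⟪fderiv ℝ F (x s) (fderiv ℝ x s v), fderiv ℝ x s w⟫
        + ⟪F (x s), fderiv ℝ (fderiv ℝ x) s v w⟫ := by
  have hx₁ : DifferentiableAt ℝ x s := hx.differentiableAt two_ne_zero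
  have hx₂ : DifferentiableAt ℝ (fderiv ℝ x) s :=
    (hx.fderiv_right one_add_one_eq_two.le).differentiableAt one_ne_zero
  unfold pullbackForm
  rw [fderiv_inner_apply ℝ (hF.fun_comp' s hx₁) (hx₂.clm_apply (differentiableAt_const w)),
    fderiv_clm_apply hx₂ (differentiableAt_const w), fderiv_fun_comp s hF hx₁]
  simp [add_comm]

theorem fderiv_pullbackForm_sub (hx : ContDiffAt ℝ 2 x s) (hF : DifferentiableAt ℝ F (x s))
    (v w : G) :
    fderiv ℝ (pullbackForm F x w) s v - fderiv ℝ (pullbackForm F x v) s w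
      = ⟪fderiv ℝ F (x s) (fderiv ℝ x s v), fderiv ℝ x s w⟫
        - ⟪fderiv ℝ F (x s) (fderiv ℝ x s w), fderiv ℝ x s v⟫ := by
  rw [fderiv_pullbackForm_apply hx hF, fderiv_pullbackForm_apply hx hF,
    hx.isSymmSndFDerivAt (by simp) v w]
  ring

end Pullback

theorem integral_green_prod_Icc {E : Type*} [NormedAddCommGroup E] [NormedSpace ℝ E]
    [CompleteSpace E] (P Q : ℝ × ℝ → E) {a₁ a₂ b₁ b₂ : ℝ} (h₁ : a₁ ≤ b₁) (h₂ : a₂ ≤ b₂)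
    (hPc : ContinuousOn P (Set.Icc (a₁, a₂) (b₁, b₂)))
    (hQc : ContinuousOn Q (Set.Icc (a₁, a₂) (b₁, b₂)))
    (hPd : ∀ p ∈ Set.Ioo a₁ b₁ ×ˢ Set.Ioo a₂ b₂, DifferentiableAt ℝ P p)
    (hQd : ∀ p ∈ Set.Ioo a₁ b₁ ×ˢ Set.Ioo a₂ b₂, DifferentiableAt ℝ Q p)
    (hi : IntegrableOn (fun p => fderiv ℝ Q p (1, 0) - fderiv ℝ P p (0, 1))
      (Set.Icc (a₁, a₂) (b₁, b₂))) :
    ∫ p in Set.Icc (a₁, a₂) (b₁, b₂), fderiv ℝ Q p (1, 0) - fderiv ℝ P p (0, 1)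
      = (∫ t in a₁..b₁, P (t, a₂)) + (∫ t in a₂..b₂, Q (b₁, t))
        - (∫ t in a₁..b₁, P (t, b₂)) - ∫ t in a₂..b₂, Q (a₁, t) := by
  have := integral_divergence_prod_Icc_of_hasFDerivAt_of_le Q (-P) (fderiv ℝ Q) (-fderiv ℝ P)
    (a₁, a₂) (b₁, b₂) ⟨h₁, h₂⟩ hQc hPc.neg (fun p hp => (hQd p hp).hasFDerivAt)
    (fun p hp => (hPd p hp).hasFDerivAt.neg) (by simpa [sub_eq_add_neg] using hi)
  simp only [Pi.neg_apply, neg_apply, ← sub_eq_add_neg, intervalIntegral.integral_neg] at this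
  rw [this]
  abel

theorem stokes_theorem_surface_general
    (a₁ b₁ a₂ b₂ : ℝ) (ha₁ : a₁ < b₁) (ha₂ : a₂ < b₂)
    (U₀ : Set (ℝ × ℝ)) (hU₀ : IsOpen U₀) (hRU₀ : Set.Icc (a₁, a₂) (b₁, b₂) ⊆ U₀)
    (x : ℝ × ℝ → EuclideanSpace ℝ (Fin 3)) (hx : ContDiffOn ℝ 2 x U₀)
    (x₁ x₂ : ℝ × ℝ → EuclideanSpace ℝ (Fin 3))
    (hx₁ : ∀ s, x₁ s = fderiv ℝ x s (1, 0)) (hx₂ : ∀ s, x₂ s = fderiv ℝ x s (0, 1))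
    (U : Set (EuclideanSpace ℝ (Fin 3))) (hU : IsOpen U)
    (hxRU : x '' Set.Icc (a₁, a₂) (b₁, b₂) ⊆ U)
    (F : EuclideanSpace ℝ (Fin 3) → EuclideanSpace ℝ (Fin 3)) (hF : ContDiffOn ℝ 1 F U) :
    (∫ s in Set.Icc (a₁, a₂) (b₁, b₂), ⟪curl3 F (x s), cross3 (x₁ s) (x₂ s)⟫)
      = (∫ t in a₁..b₁, ⟪F (x (t, a₂)), x₁ (t, a₂)⟫)
        + (∫ t in a₂..b₂, ⟪F (x (b₁, t)), x₂ (b₁, t)⟫)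
        - (∫ t in a₁..b₁, ⟪F (x (t, b₂)), x₁ (t, b₂)⟫)
        - (∫ t in a₂..b₂, ⟪F (x (a₁, t)), x₂ (a₁, t)⟫) := by
  obtain rfl : x₁ = _ := funext hx₁
  obtain rfl : x₂ = _ := funext hx₂
  set R := Set.Icc (a₁, a₂) (b₁, b₂)
  have hxR : ∀ s ∈ R, ContDiffAt ℝ 2 x s := fun s hs => hx.contDiffAt (hU₀.mem_nhds (hRU₀ hs))
  have hFR : ∀ s ∈ R, ContDiffAt ℝ 1 F (x s) :=
    fun s hs => hF.contDiffAt (hU.mem_nhds (hxRU ⟨s, hs, rfl⟩))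
  have hform (w : ℝ × ℝ) : ∀ s ∈ R, ContDiffAt ℝ 1 (pullbackForm F x w) s :=
    fun s hs => (hxR s hs).pullbackForm (hFR s hs) w
  have hcurl : Set.EqOn
      (fun s => ⟪curl3 F (x s), cross3 (fderiv ℝ x s (1, 0)) (fderiv ℝ x s (0, 1))⟫)
      (fun s => fderiv ℝ (pullbackForm F x (0, 1)) s (1, 0)
        - fderiv ℝ (pullbackForm F x (1, 0)) s (0, 1)) R := fun s hs => by
    dsimp only
    rw [inner_curl3_cross3, fderiv_pullbackForm_sub (hxR s hs)
      ((hFR s hs).differentiableAt one_ne_zero)]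
  have hcont : ContinuousOn (fun s => fderiv ℝ (pullbackForm F x (0, 1)) s (1, 0)
      - fderiv ℝ (pullbackForm F x (1, 0)) s (0, 1)) R := fun s hs =>
    ((((hform _ s hs).continuousAt_fderiv one_ne_zero).clm_apply continuousAt_const).sub
      (((hform _ s hs).continuousAt_fderiv one_ne_zero).clm_apply continuousAt_const)
      ).continuousWithinAt
  have hioo : Set.Ioo a₁ b₁ ×ˢ Set.Ioo a₂ b₂ ⊆ R :=
    fun p ⟨h₁, h₂⟩ => ⟨⟨h₁.1.le, h₂.1.le⟩, h₁.2.le, h₂.2.le⟩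
  rw [setIntegral_congr_fun measurableSet_Icc hcurl]
  exact integral_green_prod_Icc _ _ ha₁.le ha₂.le
    (fun s hs => (hform _ s hs).continuousAt.continuousWithinAt)
    (fun s hs => (hform _ s hs).continuousAt.continuousWithinAt)
    (fun s hs => (hform _ s (hioo hs)).differentiableAt one_ne_zero)
    (fun s hs => (hform _ s (hioo hs)).differentiableAt one_ne_zero)
    (hcont.integrableOn_compact isCompact_Icc)

/-- Stokes' theorem for a parametrized 2-surface in ℝ³:
`∫_R ⟪(∇×F)(x(s)), x₁(s)×x₂(s)⟫ ds` equals the circulation of `F` around the boundary. -/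
theorem stokes_theorem_surface
    (a₁ b₁ a₂ b₂ : ℝ) (ha₁ : a₁ < b₁) (ha₂ : a₂ < b₂)
    (U₀ : Set (ℝ × ℝ)) (hU₀ : IsOpen U₀) (hRU₀ : Set.Icc (a₁, a₂) (b₁, b₂) ⊆ U₀)
    (x : ℝ × ℝ → EuclideanSpace ℝ (Fin 3)) (hx : ContDiffOn ℝ 2 x U₀)
    (x₁ x₂ : ℝ × ℝ → EuclideanSpace ℝ (Fin 3))
    (hx₁ : ∀ s, x₁ s = fderiv ℝ x s (1, 0)) (hx₂ : ∀ s, x₂ s = fderiv ℝ x s (0, 1))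
    (hreg : ∀ s ∈ Set.Icc (a₁, a₂) (b₁, b₂), LinearIndependent ℝ ![x₁ s, x₂ s])
    (U : Set (EuclideanSpace ℝ (Fin 3))) (hU : IsOpen U)
    (hxRU : x '' Set.Icc (a₁, a₂) (b₁, b₂) ⊆ U)
    (F : EuclideanSpace ℝ (Fin 3) → EuclideanSpace ℝ (Fin 3)) (hF : ContDiffOn ℝ 1 F U) :
    (∫ s in Set.Icc (a₁, a₂) (b₁, b₂), ⟪curl3 F (x s), cross3 (x₁ s) (x₂ s)⟫)
      = (∫ t in a₁..b₁, ⟪F (x (t, a₂)), x₁ (t, a₂)⟫)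
        + (∫ t in a₂..b₂, ⟪F (x (b₁, t)), x₂ (b₁, t)⟫)
        - (∫ t in a₁..b₁, ⟪F (x (t, b₂)), x₁ (t, b₂)⟫)
        - (∫ t in a₂..b₂, ⟪F (x (a₁, t)), x₂ (a₁, t)⟫) :=
  stokes_theorem_surface_general a₁ b₁ a₂ b₂ ha₁ ha₂ U₀ hU₀ hRU₀ x hx x₁ x₂ hx₁ hx₂ U hU hxRU F hF
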